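/- arXiv:2505.17890 — 3 statements merged into one kernel-verified Lean document; each statement's English description precedes it below -/
import Mathlib

section
/- There exists a unique z₂ ∈ (0,1) with 1 − z₂ = exp(−4 z₂) and a unique z₃ ∈ (0,1) with 1 − z₃ = (1/4)·exp(−2 z₃) + (3/4)·exp(−6 z₃), and z₃ < z₂. -/
open Real Set

noncomputable def F2 (z : ℝ) : ℝ := z - 1 + Real.exp (-4 * z)
noncomputable def F3 (z : ℝ) : ℝ :=
  z - 1 + (1/4) * Real.exp (-2 * z) + (3/4) * Real.exp (-6 * z)

lemma sc2 : StrictConvexOn ℝ Set.univ F2 := by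
  refine ⟨convex_univ, ?_⟩
  intro x _ y _ hxy a b ha hb hab
  simp only [smul_eq_mul, F2]
  have h := strictConvexOn_exp.2 (Set.mem_univ (-4*x)) (Set.mem_univ (-4*y))
    (by intro h; apply hxy; linarith) ha hb hab
  simp only [smul_eq_mul] at h
  rw [show -4*(a*x+b*y) = a*(-4*x)+b*(-4*y) by ring]
  nlinarith [h]

lemma sc3 : StrictConvexOn ℝ Set.univ F3 := by
  refine ⟨convex_univ, ?_⟩
  intro x _ y _ hxy a b ha hb hab
  simp only [smul_eq_mul, F3]
  have h1 := strictConvexOn_exp.2 (Set.mem_univ (-2*x)) (Set.mem_univ (-2*y))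
    (by intro h; apply hxy; linarith) ha hb hab
  have h2 := strictConvexOn_exp.2 (Set.mem_univ (-6*x)) (Set.mem_univ (-6*y))
    (by intro h; apply hxy; linarith) ha hb hab
  simp only [smul_eq_mul] at h1 h2
  rw [show -2*(a*x+b*y) = a*(-2*x)+b*(-2*y) by ring,
    show -6*(a*x+b*y) = a*(-6*x)+b*(-6*y) by ring]
  nlinarith [h1, h2]

/-- strictly convex F with F 0 = 0 and F b = 0 is negative strictly between. -/
lemma neg_between {F : ℝ → ℝ} (hF : StrictConvexOn ℝ Set.univ F) (hF0 : F 0 = 0)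
    {b : ℝ} (hb : 0 < b) (hFb : F b = 0) {x : ℝ} (hx0 : 0 < x) (hxb : x < b) :
    F x < 0 := by
  have ht0 : 0 < x / b := div_pos hx0 hb
  have ht1 : x / b < 1 := (div_lt_one hb).2 hxb
  have h := hF.2 (Set.mem_univ (0:ℝ)) (Set.mem_univ b) hb.ne (by linarith : 0 < 1 - x/b) ht0
    (by ring)
  simp only [smul_eq_mul, mul_zero, zero_add, hF0, hFb, mul_zero] at h
  rw [div_mul_cancel₀ x hb.ne'] at h
  linarith

lemma uniq_zero {F : ℝ → ℝ} (hF : StrictConvexOn ℝ Set.univ F) (hF0 : F 0 = 0)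
    {a b : ℝ} (ha : 0 < a) (hb : 0 < b) (hFa : F a = 0) (hFb : F b = 0) : a = b := by
  rcases lt_trichotomy a b with h | h | h
  · exact absurd hFa (ne_of_lt (neg_between hF hF0 hb hFb ha h))
  · exact h
  · exact absurd hFb (ne_of_lt (neg_between hF hF0 ha hFa hb h))

/-- There is a unique `z₂ ∈ (0,1)` with `1 - z₂ = exp(-4 z₂)` and a unique `z₃ ∈ (0,1)`
with `1 - z₃ = (1/4) exp(-2 z₃) + (3/4) exp(-6 z₃)`, and `z₃ < z₂`. -/
theorem household_size_counterexample :
    ∃ z₂ z₃ : ℝ,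
      (z₂ ∈ Set.Ioo (0 : ℝ) 1 ∧ 1 - z₂ = Real.exp (-4 * z₂)) ∧
      (∀ w ∈ Set.Ioo (0 : ℝ) 1, 1 - w = Real.exp (-4 * w) → w = z₂) ∧
      (z₃ ∈ Set.Ioo (0 : ℝ) 1 ∧
        1 - z₃ = (1 / 4) * Real.exp (-2 * z₃) + (3 / 4) * Real.exp (-6 * z₃)) ∧
      (∀ w ∈ Set.Ioo (0 : ℝ) 1,
        1 - w = (1 / 4) * Real.exp (-2 * w) + (3 / 4) * Real.exp (-6 * w) → w = z₃) ∧
      z₃ < z₂ := by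
  have hF2_0 : F2 0 = 0 := by simp [F2]
  have hF3_0 : F3 0 = 0 := by simp [F3]; norm_num
  have hcont2 : Continuous F2 := by unfold F2; continuity
  have hcont3 : Continuous F3 := by unfold F3; continuity
  have he1 : Real.exp (-1) < 2/5 := by
    rw [Real.exp_neg, inv_lt_comm₀ (Real.exp_pos 1) (by norm_num)]
    linarith [Real.exp_one_gt_d9]
  -- F2 (3/5) < 0 and F2 1 > 0
  have hF2a : F2 (3/5) < 0 := by
    have : Real.exp (-4 * (3/5)) < Real.exp (-1) := Real.exp_lt_exp.2 (by norm_num)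
    simp only [F2]; linarith
  have hF2b : 0 < F2 1 := by
    have := Real.exp_pos (-4 * 1)
    simp only [F2]; linarith
  obtain ⟨z₂, hz₂mem, hz₂⟩ :=
    intermediate_value_Ioo (by norm_num : (3/5:ℝ) ≤ 1) hcont2.continuousOn
      (Set.mem_Ioo.2 ⟨hF2a, hF2b⟩)
  have hz₂0 : 0 < z₂ := lt_trans (by norm_num) hz₂mem.1
  have hz₂1 : z₂ < 1 := hz₂mem.2
  -- F3 (1/2) < 0 and F3 1 > 0
  have he2 : Real.exp (-1) < 1/2 := by linarith
  have hF3a : F3 (1/2) < 0 := by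
    have h1 : Real.exp (-2 * (1/2)) < 1/2 := by
      rw [show -2 * (1/2:ℝ) = -1 by norm_num]; linarith
    have h2 : Real.exp (-6 * (1/2)) < 1/2 := by
      calc Real.exp (-6 * (1/2)) < Real.exp (-1) := Real.exp_lt_exp.2 (by norm_num)
        _ < 1/2 := he2
    simp only [F3]; linarith
  have hF3b : 0 < F3 1 := by
    have hval : F3 1 = (1/4) * Real.exp (-2 * 1) + (3/4) * Real.exp (-6 * 1) := by
      simp only [F3]; ring
    rw [hval]; positivity
  obtain ⟨z₃, hz₃mem, hz₃⟩ :=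
    intermediate_value_Ioo (by norm_num : (1/2:ℝ) ≤ 1) hcont3.continuousOn
      (Set.mem_Ioo.2 ⟨hF3a, hF3b⟩)
  have hz₃0 : 0 < z₃ := lt_trans (by norm_num) hz₃mem.1
  have hz₃1 : z₃ < 1 := hz₃mem.2
  -- comparison: F3 z₂ > 0
  have hx : Real.exp (-2 * z₂) < 1/3 := by
    have h1 : Real.exp (-2 * z₂) < Real.exp (-6/5) := Real.exp_lt_exp.2 (by linarith [hz₂mem.1])
    have h2 : Real.exp (-6/5) < 1/3 := by
      rw [show (-6/5 : ℝ) = -(6/5) by norm_num, Real.exp_neg,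
        inv_lt_comm₀ (Real.exp_pos _) (by norm_num)]
      have : (1:ℝ) + 1/5 ≤ Real.exp (1/5) := by
        have := Real.add_one_le_exp (1/5 : ℝ); linarith
      have hmul : Real.exp 1 * Real.exp (1/5) = Real.exp (6/5) := by
        rw [← Real.exp_add]; norm_num
      nlinarith [Real.exp_one_gt_d9, Real.exp_pos (1/5 : ℝ)]
    linarith
  have hxpos : 0 < Real.exp (-2 * z₂) := Real.exp_pos _
  have hsq : Real.exp (-4 * z₂) = Real.exp (-2 * z₂) ^ 2 := by
    rw [show (-4 : ℝ) * z₂ = (-2 * z₂) + (-2 * z₂) by ring, Real.exp_add]; ring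
  have hcb : Real.exp (-6 * z₂) = Real.exp (-2 * z₂) ^ 3 := by
    rw [show (-6 : ℝ) * z₂ = (-2 * z₂) + ((-2 * z₂) + (-2 * z₂)) by ring, Real.exp_add,
      Real.exp_add]; ring
  have hF3z₂ : 0 < F3 z₂ := by
    have hz₂eq : z₂ - 1 + Real.exp (-4 * z₂) = 0 := hz₂
    have hval : F3 z₂ = (1/4) * Real.exp (-2*z₂) - Real.exp (-2*z₂)^2
        + (3/4) * Real.exp (-2*z₂)^3 := by
      simp only [F3]
      rw [hcb]
      linear_combination hz₂eq - hsq
    rw [hval]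
    nlinarith [mul_pos (mul_pos hxpos
      (show (0:ℝ) < 1 - 3*Real.exp (-2*z₂) by linarith))
      (show (0:ℝ) < 1 - Real.exp (-2*z₂) by nlinarith)]
  have hlt : z₃ < z₂ := by
    rcases lt_trichotomy z₃ z₂ with h | h | h
    · exact h
    · exact absurd (h ▸ hz₃) (ne_of_gt hF3z₂)
    · exact absurd (neg_between sc3 hF3_0 hz₃0 hz₃ hz₂0 h) (by rw [not_lt]; exact le_of_lt hF3z₂)
  refine ⟨z₂, z₃, ⟨⟨hz₂0, hz₂1⟩, by simp only [F2] at hz₂; linarith⟩, ?_,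
    ⟨⟨hz₃0, hz₃1⟩, by simp only [F3] at hz₃; linarith⟩, ?_, hlt⟩
  · intro w hw hweq
    exact uniq_zero sc2 hF2_0 hw.1 hz₂0 (by simp only [F2]; linarith) hz₂
  · intro w hw hweq
    exact uniq_zero sc3 hF3_0 hw.1 hz₃0 (by simp only [F3]; linarith) hz₃
end

section
/- Let z ∈ (0,1) be the unique solution of 1 − z = exp(−3z) and z₂ ∈ (0,1) the unique solution of 1 − z₂ = exp(−4 z₂). Then z < z₂. -/
/-- If `z ∈ (0,1)` solves `1 - z = exp(-3 z)` and `z₂ ∈ (0,1)` solves `1 - z₂ = exp(-4 z₂)`,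
then `z < z₂`. -/
theorem swap_all_local_counterexample (z z₂ : ℝ)
    (hz : z ∈ Set.Ioo (0 : ℝ) 1) (hz₂ : z₂ ∈ Set.Ioo (0 : ℝ) 1)
    (hzeq : 1 - z = Real.exp (-3 * z)) (hz₂eq : 1 - z₂ = Real.exp (-4 * z₂)) :
    z < z₂ := by
  obtain ⟨hz0, hz1⟩ := hz
  obtain ⟨hz₂0, hz₂1⟩ := hz₂
  by_contra hle
  push_neg at hle   -- z₂ ≤ z
  -- exp(-4z) < exp(-3z) = 1 - z
  have key : Real.exp (-4 * z) < 1 - z := by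
    rw [hzeq]
    exact Real.exp_lt_exp.2 (by nlinarith)
  rcases eq_or_lt_of_le hle with heq | hlt
  · -- z₂ = z : then 1 - z = exp(-4z) contradicting key
    rw [heq] at hz₂eq
    linarith
  · -- z₂ < z : use convexity of exp
    set b : ℝ := z₂ / z with hb
    have hb0 : 0 < b := div_pos hz₂0 hz0
    have hb1 : b < 1 := (div_lt_one hz0).2 hlt
    have hbz : b * z = z₂ := div_mul_cancel₀ z₂ (ne_of_gt hz0)
    have hconv := convexOn_exp.2 (Set.mem_univ (0 : ℝ))
      (Set.mem_univ (-4 * z)) (by linarith : (0:ℝ) ≤ 1 - b) (le_of_lt hb0)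
      (by ring : (1 - b) + b = 1)
    simp only [smul_eq_mul, mul_zero, zero_add, Real.exp_zero, mul_one] at hconv
    have harg : b * (-4 * z) = -4 * z₂ := by rw [← hbz]; ring
    rw [harg] at hconv
    -- exp(-4z₂) ≤ (1-b) + b * exp(-4z) < (1-b) + b*(1-z) = 1 - z₂
    have : Real.exp (-4 * z₂) < 1 - z₂ := by
      calc Real.exp (-4 * z₂) ≤ (1 - b) + b * Real.exp (-4 * z) := hconv
        _ < (1 - b) + b * (1 - z) := by nlinarith
        _ = 1 - z₂ := by rw [← hbz]; ring
    linarith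
end

section
/- Let h ≥ 2 be an integer and f : [0,1] → (0,∞) a differentiable function with f(1) = 1 and f′(1) = μ_L. For i = 0, …, h−2 and p ∈ [0,1] let v_i(p) = f(1 − (1−p)(i+1)/(h−1)). Suppose f₀, …, f_{h−1} are real-valued functions, differentiable on a neighbourhood of p = 1 in [0,1], satisfying for every n = 0, 1, …, h−1 and all such p: Σ_{i=0}^{n} C(h−1−i, n−i) · v_i(p)^{n+1−h} · f_i(p) = C(h−1, n), where C(·,·) denotes binomial coefficients and, when n = h−1, every factor v_i(p)^{n+1−h} has exponent zero and equals 1. Then f₀(1) = 1, f_i(1) = 0 for 1 ≤ i ≤ h−1, and the derivatives at p = 1 satisfy f₀′(1) = μ_L, f₁′(1) = −μ_L, and f_i′(1) = 0 for 2 ≤ i ≤ h−1. -/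
open Set Finset

lemma phi_hasDeriv (c : ℝ) :
    HasDerivAt (fun p : ℝ => 1 - (1 - p) * c) c 1 := by
  have := ((hasDerivAt_id (1:ℝ)).const_sub 1).mul_const c
  simpa using this.const_sub 1

lemma term_deriv (h : ℕ) (hh : 2 ≤ h) (f : ℝ → ℝ) (μL : ℝ)
    (hf1 : f 1 = 1) (hf'1 : HasDerivWithinAt f μL (Set.Icc (0:ℝ) 1) 1)
    (g : ℝ → ℝ) (dg : ℝ) (hg : HasDerivWithinAt g dg (Set.Icc (0:ℝ) 1) 1)
    (i : ℕ) (hi : i + 2 ≤ h) (k : ℤ) :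
    HasDerivWithinAt
      (fun p => (f (1 - (1 - p) * ((i : ℝ) + 1) / ((h : ℝ) - 1))) ^ k * g p)
      ((k : ℝ) * (μL * (((i : ℝ) + 1) / ((h : ℝ) - 1))) * g 1 + dg)
      (Set.Icc (0:ℝ) 1) 1 := by
  set c : ℝ := ((i : ℝ) + 1) / ((h : ℝ) - 1) with hc
  have hhr : (1:ℝ) ≤ (h:ℝ) - 1 := by
    have : (2:ℝ) ≤ (h:ℝ) := by exact_mod_cast hh
    linarith
  have hc0 : 0 < c := by
    apply div_pos (by positivity) (by linarith)
  have hc1 : c ≤ 1 := by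
    rw [hc, div_le_one (by linarith)]
    have : (i:ℝ) + 2 ≤ (h:ℝ) := by exact_mod_cast hi
    linarith
  have hmap : Set.MapsTo (fun p : ℝ => 1 - (1 - p) * c) (Set.Icc (0:ℝ) 1) (Set.Icc (0:ℝ) 1) := by
    intro p hp
    obtain ⟨hp0, hp1⟩ := hp
    constructor
    · show (0:ℝ) ≤ 1 - (1 - p) * c
      nlinarith
    · show (1:ℝ) - (1 - p) * c ≤ 1
      nlinarith
  have hphi1 : (fun p : ℝ => 1 - (1 - p) * c) 1 = 1 := by simp
  have hF : HasDerivWithinAt (fun p : ℝ => f (1 - (1 - p) * c)) (μL * c) (Set.Icc (0:ℝ) 1) 1 := by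
    have := HasDerivWithinAt.comp (h := fun p : ℝ => 1 - (1 - p) * c) (h₂ := f) 1
      (by rw [show (1:ℝ) - (1 - 1) * c = 1 by ring]; exact hf'1) ((phi_hasDeriv c).hasDerivWithinAt) hmap
    exact this
  have hF1 : f ((fun p : ℝ => 1 - (1 - p) * c) 1) = 1 := by rw [hphi1, hf1]
  have hzp : HasDerivWithinAt (fun p : ℝ => (f (1 - (1 - p) * c)) ^ k)
      ((k : ℝ) * (μL * c)) (Set.Icc (0:ℝ) 1) 1 := by
    have h1 := hasDerivAt_zpow k (f ((fun p : ℝ => 1 - (1 - p) * c) 1))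
      (Or.inl (by rw [hF1]; exact one_ne_zero))
    have h2 := h1.comp_hasDerivWithinAt 1 hF
    simp only [hF1, one_zpow, mul_one] at h2
    exact h2
  have := hzp.mul hg
  have heq : (fun p : ℝ => f (1 - (1 - p) * ((i : ℝ) + 1) / ((h : ℝ) - 1)) ^ k * g p)
      = fun p : ℝ => (f (1 - (1 - p) * c)) ^ k * g p := by
    funext p; rw [hc, mul_div_assoc]
  rw [heq]
  refine this.congr_deriv ?_
  have : (f ((1:ℝ) - (1 - 1) * c)) ^ k = 1 := by simp [hf1]
  rw [this]
  ring


/-- Boundary values and derivatives at `p = 1` of the susceptibility-set size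
probabilities `f_i(p) = P(S^{(h,p)} = i+1)`, characterized by the triangular linear
system `Σ_{i=0}^n C(h-1-i, n-i) v_i(p)^{n+1-h} f_i(p) = C(h-1, n)` with
`v_i(p) = f(1 - (1-p)(i+1)/(h-1))`:  `f₀(1) = 1`, `f_i(1) = 0` for `i ≥ 1`,
`f₀'(1) = μ_L`, `f₁'(1) = -μ_L` and `f_i'(1) = 0` for `i ≥ 2`. -/
theorem susceptibility_probs_at_p_one (h : ℕ) (hh : 2 ≤ h) (f : ℝ → ℝ) (μL : ℝ)
    (hfpos : ∀ s ∈ Set.Icc (0 : ℝ) 1, 0 < f s)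
    (hfdiff : DifferentiableOn ℝ f (Set.Icc (0 : ℝ) 1))
    (hf1 : f 1 = 1)
    (hf'1 : HasDerivWithinAt f μL (Set.Icc (0 : ℝ) 1) 1)
    (fi : ℕ → ℝ → ℝ) (d : ℕ → ℝ)
    (hfid : ∀ i < h, HasDerivWithinAt (fi i) (d i) (Set.Icc (0 : ℝ) 1) 1)
    (a : ℝ) (ha : a ∈ Set.Ico (0 : ℝ) 1)
    (hsys : ∀ p ∈ Set.Ioc a 1, ∀ n < h,
      ∑ i ∈ Finset.range (n + 1),
          ((h - 1 - i).choose (n - i) : ℝ) *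
            (f (1 - (1 - p) * ((i : ℝ) + 1) / ((h : ℝ) - 1))) ^ ((n : ℤ) + 1 - (h : ℤ)) *
            fi i p =
        ((h - 1).choose n : ℝ)) :
    fi 0 1 = 1 ∧ (∀ i, 1 ≤ i → i ≤ h - 1 → fi i 1 = 0) ∧
      d 0 = μL ∧ d 1 = -μL ∧ ∀ i, 2 ≤ i → i ≤ h - 1 → d i = 0 := by
  have h1mem : (1:ℝ) ∈ Set.Ioc a 1 := ⟨ha.2, le_refl 1⟩
  have hhr : (2:ℝ) ≤ (h:ℝ) := by exact_mod_cast hh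
  have hne : (h:ℝ) - 1 ≠ 0 := by linarith
  -- Step A: boundary values
  have hval : ∀ n, n < h → fi n 1 = if n = 0 then 1 else 0 := by
    intro n
    induction n using Nat.strong_induction_on with
    | _ n IH =>
      intro hn
      have E := hsys 1 h1mem n hn
      simp only [sub_self, zero_mul, zero_div, sub_zero, hf1, one_zpow, mul_one] at E
      rw [Finset.sum_range_succ] at E
      rcases Nat.eq_zero_or_pos n with h0 | h0
      · subst h0; simpa using E
      · have hrest : ∑ i ∈ Finset.range n, ((h - 1 - i).choose (n - i) : ℝ) * fi i 1
            = ((h - 1).choose n : ℝ) := by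
          rw [Finset.sum_eq_single 0]
          · rw [IH 0 h0 (by omega)]; simp
          · intro b hb hb0
            rw [IH b (Finset.mem_range.mp hb) (by have := Finset.mem_range.mp hb; omega)]
            simp [hb0]
          · intro hc; exact absurd (Finset.mem_range.mpr h0) hc
        rw [hrest] at E
        have : fi n 1 = 0 := by
          have h1 : ((h - 1 - n).choose (n - n) : ℝ) = 1 := by simp
          rw [h1] at E; linarith
        simp [this, Nat.pos_iff_ne_zero.mp h0]
  -- Step B: derivative equations
  have heqn : ∀ n, n < h →
      ∑ i ∈ Finset.range (n + 1),
        ((h - 1 - i).choose (n - i) : ℝ) *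
          ((((n : ℤ) + 1 - (h : ℤ) : ℤ) : ℝ) * (μL * (((i : ℝ) + 1) / ((h : ℝ) - 1))) * fi i 1
            + d i) = 0 := by
    intro n hn
    set k : ℤ := (n : ℤ) + 1 - (h : ℤ) with hk
    have hD : HasDerivWithinAt
        (fun p => ∑ i ∈ Finset.range (n + 1),
          ((h - 1 - i).choose (n - i) : ℝ) *
            (f (1 - (1 - p) * ((i : ℝ) + 1) / ((h : ℝ) - 1))) ^ k * fi i p)
        (∑ i ∈ Finset.range (n + 1),
          ((h - 1 - i).choose (n - i) : ℝ) *
            ((k : ℝ) * (μL * (((i : ℝ) + 1) / ((h : ℝ) - 1))) * fi i 1 + d i))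
        (Set.Icc (0:ℝ) 1) 1 := by
      rcases eq_or_lt_of_le (Nat.succ_le_of_lt hn) with hcase | hcase
      · -- n + 1 = h, exponent is 0
        have hk0 : k = 0 := by omega
        simp only [hk0, zpow_zero, mul_one, Int.cast_zero, zero_mul, zero_add]
        apply HasDerivWithinAt.fun_sum
        intro i hi
        exact (hfid i (by have := Finset.mem_range.mp hi; omega)).const_mul _
      · -- n + 1 < h
        apply HasDerivWithinAt.fun_sum
        intro i hi
        have hi' : i + 2 ≤ h := by have := Finset.mem_range.mp hi; omega
        have := (term_deriv h hh f μL hf1 hf'1 (fi i) (d i)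
          (hfid i (by omega)) i hi' k).const_mul (((h - 1 - i).choose (n - i) : ℝ))
        simpa [mul_assoc] using this
    have h0 : HasDerivWithinAt
        (fun p => ∑ i ∈ Finset.range (n + 1),
          ((h - 1 - i).choose (n - i) : ℝ) *
            (f (1 - (1 - p) * ((i : ℝ) + 1) / ((h : ℝ) - 1))) ^ k * fi i p)
        0 (Set.Icc (0:ℝ) 1) 1 := by
      have hmem : Set.Ioc a 1 ∈ nhdsWithin 1 (Set.Icc (0:ℝ) 1) := by
        have hset : Set.Ioc a 1 = Set.Icc (0:ℝ) 1 ∩ Set.Ioi a := by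
          ext x
          simp only [Set.mem_Ioc, Set.mem_inter_iff, Set.mem_Icc, Set.mem_Ioi]
          constructor
          · intro ⟨h1, h2⟩; exact ⟨⟨le_of_lt (lt_of_le_of_lt ha.1 h1), h2⟩, h1⟩
          · intro ⟨⟨_, h2⟩, h3⟩; exact ⟨h3, h2⟩
        rw [hset]
        exact inter_mem_nhdsWithin _ (Ioi_mem_nhds ha.2)
      refine (hasDerivWithinAt_const 1 _ ((h - 1).choose n : ℝ)).congr_of_eventuallyEq
        ?_ ?_
      · exact Filter.eventuallyEq_of_mem hmem (fun p hp => hsys p hp n hn)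
      · exact hsys 1 h1mem n hn
    exact ((uniqueDiffOn_Icc zero_lt_one) 1 (by simp)).eq_deriv _ hD h0
  -- extraction of derivative values
  have hd0 : d 0 = μL := by
    have E := heqn 0 (by omega)
    rw [Finset.sum_range_one] at E
    rw [hval 0 (by omega)] at E
    simp only [if_pos rfl, Nat.sub_zero, Nat.choose_zero_right, Nat.cast_one, one_mul,
      mul_one, Nat.cast_zero] at E
    push_cast at E
    field_simp at E
    have h2 : (d 0 - μL) * ((h:ℝ) - 1) = 0 := by linear_combination E
    rcases mul_eq_zero.mp h2 with h3 | h3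
    · linarith
    · exact absurd h3 hne
  have hd1 : d 1 = -μL := by
    have E := heqn 1 (by omega)
    rw [Finset.sum_range_succ, Finset.sum_range_one] at E
    rw [hval 0 (by omega), hval 1 (by omega)] at E
    simp only [if_pos rfl, if_neg one_ne_zero] at E
    have hc1 : ((h - 1 - 0).choose (1 - 0) : ℝ) = (h:ℝ) - 1 := by
      simp only [Nat.sub_zero, Nat.choose_one_right]
      push_cast [Nat.cast_sub (by omega : 1 ≤ h)]
      ring
    have hc2 : ((h - 1 - 1).choose (1 - 1) : ℝ) = 1 := by simp
    rw [hc1, hc2] at E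
    push_cast at E
    field_simp at E
    rw [hd0] at E
    have h2 : (d 1 + μL) * ((h:ℝ) - 1) = 0 := by linear_combination E
    rcases mul_eq_zero.mp h2 with h3 | h3
    · linarith
    · exact absurd h3 hne
  have hdn : ∀ n, 2 ≤ n → n < h → d n = 0 := by
    intro n
    induction n using Nat.strong_induction_on with
    | _ n IH =>
      intro hn2 hnh
      have E := heqn n hnh
      rw [Finset.sum_range_succ] at E
      -- split the sum over range n into  i=0, i=1, rest
      have hsplit : ∑ i ∈ Finset.range n,
          ((h - 1 - i).choose (n - i) : ℝ) *
            ((((n : ℤ) + 1 - (h : ℤ) : ℤ) : ℝ) * (μL * (((i : ℝ) + 1) / ((h : ℝ) - 1))) * fi i 1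
              + d i)
          = ((h - 1).choose n : ℝ) *
              ((((n : ℤ) + 1 - (h : ℤ) : ℤ) : ℝ) * (μL * (1 / ((h : ℝ) - 1))) + μL)
            + ((h - 2).choose (n - 1) : ℝ) * (-μL) := by
        rw [Finset.range_eq_Ico, ← Finset.sum_Ico_consecutive _ (by omega : 0 ≤ 2) (by omega : 2 ≤ n)]
        have hIco2 : ∑ i ∈ Finset.Ico 2 n,
            ((h - 1 - i).choose (n - i) : ℝ) *
              ((((n : ℤ) + 1 - (h : ℤ) : ℤ) : ℝ) * (μL * (((i : ℝ) + 1) / ((h : ℝ) - 1))) * fi i 1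
                + d i) = 0 := by
          apply Finset.sum_eq_zero
          intro i hi
          obtain ⟨hi2, hin⟩ := Finset.mem_Ico.mp hi
          rw [hval i (by omega), IH i hin hi2 (by omega)]
          simp [Nat.pos_iff_ne_zero.mp (by omega : 0 < i)]
        rw [hIco2, add_zero]
        have : Finset.Ico 0 2 = {0, 1} := by decide
        rw [this, Finset.sum_insert (by decide), Finset.sum_singleton]
        rw [hval 0 (by omega), hval 1 (by omega), hd0, hd1]
        simp only [if_pos rfl, if_neg one_ne_zero, Nat.sub_zero, Nat.cast_zero, Nat.cast_one,
          mul_zero, zero_add, mul_one]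
        have e1 : h - 1 - 1 = h - 2 := by omega
        rw [e1]
        norm_num
      rw [hsplit] at E
      rw [hval n (by omega)] at E
      simp only [if_neg (by omega : ¬ n = 0), mul_zero, zero_add, Nat.sub_self,
        Nat.choose_zero_right, Nat.cast_one, one_mul] at E
      -- the binomial identity
      have hbin : ((h - 1).choose n : ℝ) * (n : ℝ) = ((h : ℝ) - 1) * ((h - 2).choose (n - 1) : ℝ) := by
        have hnat : (h - 1) * (h - 2).choose (n - 1) = (h - 1).choose n * n := by
          have := Nat.add_one_mul_choose_eq (h - 2) (n - 1)
          have e1 : h - 2 + 1 = h - 1 := by omega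
          have e2 : n - 1 + 1 = n := by omega
          rw [e1, e2] at this
          exact this
        have := congrArg (fun m : ℕ => (m : ℝ)) hnat
        push_cast at this
        rw [Nat.cast_sub (by omega : 1 ≤ h)] at this
        push_cast at this
        linarith [this]
      push_cast at E
      field_simp at E
      have h2 : d n * ((h:ℝ) - 1) = 0 := by linear_combination E - μL * hbin
      rcases mul_eq_zero.mp h2 with h3 | h3
      · exact h3
      · exact absurd h3 hne
  refine ⟨by simpa using hval 0 (by omega), fun i hi1 hi2 => by
      rw [hval i (by omega)]; simp [Nat.pos_iff_ne_zero.mp (by omega : 0 < i)],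
    hd0, hd1, fun i hi2 hih => hdn i hi2 (by omega)⟩
end
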